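/- Existence and uniqueness for the deterministic reflected integral equation (pathwise counterpart of the reflected diffusion): let b : ℝᴺ → ℝᴺ be Lipschitz, let x₀ ∈ ℝᴺ satisfy 1·x₀ ≤ θ, and let w : [0,T] → ℝᴺ be continuous with w(0) = 0. Then there exists exactly one continuous x : [0,T] → ℝᴺ satisfying the fixed-point equation x(t) = Γ(x₀ + w + ∫₀^· b(x(u)) du)(t) for all t ∈ [0,T]. Moreover, setting ℓ = g_{x₀ + w + ∫₀^· b(x(u)) du}, the pair (x, ℓ) is the unique pair of continuous functions such that: ℓ is nondecreasing with ℓ(0) = 0; x(t) = x₀ + w(t) + ∫₀^t b(x(u)) du − ℓ(t) e_N for all t; 1·x(t) ≤ θ for all t; and ℓ is constant on every subinterval of [0,T] on which 1·x < θ. -/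

import Mathlib

/-!
Both the constraint `1·x ≤ θ` and the reflection see a path `f` only through the scalar
`1·f - θ`, and `1·e_N = 1`; so `g_f` is the classical regulator `sup_{u ≤ t} (1·f(u) - θ)⁺`
of a one-dimensional Skorokhod problem, and Skorokhod's uniqueness argument identifies every
admissible `ℓ` with it. As a running supremum, `g_f` is 1-Lipschitz in `1·f` for the sup
norm, and `|1·v| ≤ √N ‖v‖`; hence the Picard map `Φ x = Γ(x₀ + w + ∫₀^· b(x))` satisfies
the Volterra estimate `‖Φx(t) - Φy(t)‖ ≤ (1 + √N) K ∫₀ᵗ ‖x - y‖`. By induction its `n`-th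
iterate is Lipschitz with constant `((1 + √N) K T)ⁿ / n!` on `C([0,T])`, so some iterate is
a contraction and `Φ` has exactly one fixed point.
-/

open Set

/-- The coordinate sum `1 · x` of a vector in Euclidean space. -/
noncomputable def sumC {N : ℕ} (x : EuclideanSpace ℝ (Fin N)) : ℝ := ∑ i, x i

/-- The regulator `g_f(t) = sup_{0 ≤ u ≤ t} (θ - 1·f(u))⁻`. -/
noncomputable def reg (N : ℕ) (θ : ℝ) (f : ℝ → EuclideanSpace ℝ (Fin N)) (t : ℝ) : ℝ :=
  sSup ((fun u => max (sumC (f u) - θ) 0) '' Icc 0 t)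

/-- The `N`-th standard basis vector `e_N`. -/
noncomputable def eN (N : ℕ) (hN : 1 ≤ N) : EuclideanSpace ℝ (Fin N) :=
  EuclideanSpace.single ⟨N - 1, by omega⟩ 1

/-- The Skorohod-type reflection map `Γ(f)(t) = f(t) - g_f(t) e_N`. -/
noncomputable def Gam (N : ℕ) (hN : 1 ≤ N) (θ : ℝ) (f : ℝ → EuclideanSpace ℝ (Fin N))
    (t : ℝ) : EuclideanSpace ℝ (Fin N) :=
  f t - reg N θ f t • eN N hN

/-- The sup norm `‖f‖_T = sup_{t ∈ [0,T]} ‖f(t)‖`. -/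
noncomputable def supNorm (N : ℕ) (T : ℝ) (f : ℝ → EuclideanSpace ℝ (Fin N)) : ℝ :=
  sSup ((fun t => ‖f t‖) '' Icc 0 T)

noncomputable def runningSupPos (z : ℝ → ℝ) (t : ℝ) : ℝ :=
  sSup ((fun u => max (z u) 0) '' Icc 0 t)

section RunningSupPos

variable {z z' : ℝ → ℝ} {s t T M : ℝ}

lemma runningSupPos_le (ht : 0 ≤ t) (h : ∀ u ∈ Icc 0 t, max (z u) 0 ≤ M) :
    runningSupPos z t ≤ M :=
  csSup_le ((nonempty_Icc.2 ht).image _) (forall_mem_image.2 h)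

lemma le_runningSupPos (hz : ContinuousOn z (Icc 0 t)) {u : ℝ} (hu : u ∈ Icc 0 t) :
    max (z u) 0 ≤ runningSupPos z t :=
  le_csSup (isCompact_Icc.image_of_continuousOn (hz.sup continuousOn_const)).bddAbove
    (mem_image_of_mem _ hu)

lemma runningSupPos_nonneg (hz : ContinuousOn z (Icc 0 t)) (ht : 0 ≤ t) :
    0 ≤ runningSupPos z t :=
  (le_max_right _ _).trans (le_runningSupPos hz ⟨ht, le_rfl⟩)

lemma runningSupPos_zero : runningSupPos z 0 = max (z 0) 0 := by
  rw [runningSupPos, Icc_self, image_singleton, csSup_singleton]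

lemma monotoneOn_runningSupPos (hz : ContinuousOn z (Icc 0 T)) :
    MonotoneOn (runningSupPos z) (Icc 0 T) := fun _ hs _ ht hst =>
  runningSupPos_le hs.1 fun _ hu =>
    le_runningSupPos (hz.mono (Icc_subset_Icc le_rfl ht.2)) ⟨hu.1, hu.2.trans hst⟩

lemma continuousOn_runningSupPos (hz : ContinuousOn z (Icc 0 T)) :
    ContinuousOn (runningSupPos z) (Icc 0 T) := by
  rcases lt_or_ge T 0 with hT | hT
  · simp [Icc_eq_empty_of_lt hT]
  -- `t ↦ sup_{u ∈ [0,T]} z⁺(min u t)` is continuous by compactness of `[0,T]`.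
  set g : ℝ → ℝ := fun u => max (z (projIcc 0 T hT u)) 0
  have hg : Continuous g :=
    (hz.comp_continuous (continuous_subtype_val.comp continuous_projIcc) fun u =>
      (projIcc 0 T hT u).2).max continuous_const
  refine (((isCompact_Icc (a := 0) (b := T)).continuous_sSup (f := fun t u => g (min u t))
    (hg.comp (continuous_snd.min continuous_fst))).continuousOn).congr fun t ht => ?_
  have hmin : (fun u => min u t) '' Icc 0 T = Icc 0 t := by
    ext u
    constructor
    · rintro ⟨v, hv, rfl⟩
      exact ⟨le_min hv.1 ht.1, min_le_right _ _⟩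
    · exact fun hu => ⟨u, ⟨hu.1, hu.2.trans ht.2⟩, min_eq_left hu.2⟩
  show runningSupPos z t = sSup ((fun u => g (min u t)) '' Icc 0 T)
  rw [← image_image g (fun u => min u t), hmin]
  exact congrArg sSup <| image_congr fun u hu => by
    simp only [g, projIcc_of_mem hT ⟨hu.1, hu.2.trans ht.2⟩]

lemma runningSupPos_le_add (hz' : ContinuousOn z' (Icc 0 t)) (ht : 0 ≤ t) {ε : ℝ} (hε : 0 ≤ ε)
    (h : ∀ u ∈ Icc 0 t, z u ≤ z' u + ε) : runningSupPos z t ≤ runningSupPos z' t + ε :=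
  runningSupPos_le ht fun u hu => calc
    max (z u) 0 ≤ max (z' u + ε) (0 + ε) := max_le_max (h u hu) (by linarith)
    _ = max (z' u) 0 + ε := max_add_add_right _ _ _
    _ ≤ runningSupPos z' t + ε := by linarith [le_runningSupPos hz' hu]

lemma abs_runningSupPos_sub_le (hz : ContinuousOn z (Icc 0 t)) (hz' : ContinuousOn z' (Icc 0 t))
    (ht : 0 ≤ t) {ε : ℝ} (h : ∀ u ∈ Icc 0 t, |z u - z' u| ≤ ε) :
    |runningSupPos z t - runningSupPos z' t| ≤ ε := by
  have hε : 0 ≤ ε := (abs_nonneg _).trans (h 0 ⟨le_rfl, ht⟩)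
  rw [abs_sub_le_iff]
  constructor
  · linarith [runningSupPos_le_add (z := z) hz' ht hε fun u hu =>
      by linarith [(abs_le.1 (h u hu)).2]]
  · linarith [runningSupPos_le_add (z := z') hz ht hε fun u hu =>
      by linarith [(abs_le.1 (h u hu)).1]]

lemma runningSupPos_le_max (hz : ContinuousOn z (Icc 0 t)) (hs : 0 ≤ s) (hst : s ≤ t)
    (hM : ∀ u ∈ Icc s t, max (z u) 0 ≤ M) : runningSupPos z t ≤ max (runningSupPos z s) M :=
  runningSupPos_le (hs.trans hst) fun u hu => by
    rcases le_total u s with hus | hsu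
    · exact le_max_of_le_left
        (le_runningSupPos (hz.mono (Icc_subset_Icc le_rfl hst)) ⟨hu.1, hus⟩)
    · exact le_max_of_le_right (hM u ⟨hsu, hu.2⟩)

lemma runningSupPos_eq_of_forall_lt (hz : ContinuousOn z (Icc 0 t)) (hs : 0 ≤ s) (hst : s ≤ t)
    (hlt : ∀ u ∈ Icc s t, z u < runningSupPos z u) : runningSupPos z t = runningSupPos z s := by
  obtain ⟨u, hu, hmax⟩ := isCompact_Icc.exists_isMaxOn (nonempty_Icc.2 hst)
    ((hz.sup continuousOn_const).mono (Icc_subset_Icc hs le_rfl))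
  have hzu : ContinuousOn z (Icc 0 u) := hz.mono (Icc_subset_Icc le_rfl hu.2)
  have hmax_le : max (z u) 0 ≤ runningSupPos z s := by
    rcases le_total (z u) 0 with hneg | hpos
    · rw [max_eq_right hneg]
      exact runningSupPos_nonneg (hz.mono (Icc_subset_Icc le_rfl hst)) hs
    · have h := (hlt u hu).trans_le (runningSupPos_le_max hzu hs hu.1
        fun v hv => isMaxOn_iff.1 hmax v ⟨hv.1, hv.2.trans hu.2⟩)
      rw [max_eq_left hpos] at h ⊢
      exact (lt_max_iff.1 h).resolve_right (lt_irrefl _) |>.le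
  refine le_antisymm ?_ (monotoneOn_runningSupPos hz ⟨hs, hst⟩ ⟨hs.trans hst, le_rfl⟩ hst)
  exact (runningSupPos_le_max hz hs hst fun v hv => isMaxOn_iff.1 hmax v hv).trans
    (max_le le_rfl hmax_le)

end RunningSupPos

/-- The regulator of the one-dimensional Skorokhod problem on `[0,T]` that keeps the reflected
path `z - ℓ` in `(-∞, 0]`. -/
structure IsSkorokhodReg (T : ℝ) (z ℓ : ℝ → ℝ) : Prop where
  continuousOn : ContinuousOn ℓ (Icc 0 T)
  monotoneOn : MonotoneOn ℓ (Icc 0 T)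
  zero : ℓ 0 = 0
  le : ∀ t ∈ Icc 0 T, z t ≤ ℓ t
  eq_of_forall_lt : ∀ s t, 0 ≤ s → s ≤ t → t ≤ T → (∀ u ∈ Icc s t, z u < ℓ u) → ℓ t = ℓ s

section Skorokhod

variable {z ℓ : ℝ → ℝ} {T : ℝ}

lemma isSkorokhodReg_runningSupPos (hz : ContinuousOn z (Icc 0 T)) (hz0 : z 0 ≤ 0) :
    IsSkorokhodReg T z (runningSupPos z) where
  continuousOn := continuousOn_runningSupPos hz
  monotoneOn := monotoneOn_runningSupPos hz
  zero := by rw [runningSupPos_zero, max_eq_right hz0]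
  le t ht := (le_max_left _ _).trans (le_runningSupPos (hz.mono (Icc_subset_Icc le_rfl ht.2))
    ⟨ht.1, le_rfl⟩)
  eq_of_forall_lt _ _ hs hst ht :=
    runningSupPos_eq_of_forall_lt (hz.mono (Icc_subset_Icc le_rfl ht)) hs hst

namespace IsSkorokhodReg

lemma runningSupPos_le (h : IsSkorokhodReg T z ℓ) {t : ℝ} (ht : t ∈ Icc 0 T) :
    runningSupPos z t ≤ ℓ t :=
  _root_.runningSupPos_le ht.1 fun u hu =>
    have hℓ : ℓ u ≤ ℓ t := h.monotoneOn ⟨hu.1, hu.2.trans ht.2⟩ ht hu.2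
    max_le ((h.le u ⟨hu.1, hu.2.trans ht.2⟩).trans hℓ)
      (h.zero ▸ h.monotoneOn ⟨le_rfl, ht.1.trans ht.2⟩ ht ht.1)

/-- If `ℓ t` exceeded the running supremum `M`, then after the last time `s ≤ t` with `ℓ s ≤ M`
we would have `z ≤ M < ℓ`, so `ℓ` would be constant on `[s,t]`. -/
lemma le_runningSupPos (h : IsSkorokhodReg T z ℓ) (hz : ContinuousOn z (Icc 0 T)) {t : ℝ}
    (ht : t ∈ Icc 0 T) : ℓ t ≤ runningSupPos z t := by
  by_contra! hlt
  set M := runningSupPos z t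
  have htT : Icc 0 t ⊆ Icc 0 T := Icc_subset_Icc le_rfl ht.2
  set S := Icc 0 t ∩ ℓ ⁻¹' Iic M
  have hS : IsCompact S := isCompact_Icc.of_isClosed_subset
    ((h.continuousOn.mono htT).preimage_isClosed_of_isClosed isClosed_Icc isClosed_Iic)
    inter_subset_left
  have h0S : 0 ∈ S := ⟨⟨le_rfl, ht.1⟩, by
    simpa [h.zero] using runningSupPos_nonneg (hz.mono htT) ht.1⟩
  have hsS : sSup S ∈ S := hS.sSup_mem ⟨0, h0S⟩
  set s := sSup S
  have hst : s < t := lt_of_le_of_ne hsS.1.2 fun hs => by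
    rw [hs] at hsS
    exact hlt.not_ge hsS.2
  have hgt : ∀ u ∈ Ioc s t, M < ℓ u := fun u hu => not_le.1 fun hu' =>
    hu.1.not_ge (le_csSup hS.bddAbove ⟨⟨hsS.1.1.trans hu.1.le, hu.2⟩, hu'⟩)
  have hflat : EqOn ℓ (fun _ => ℓ t) (Ioc s t) := fun u hu =>
    (h.eq_of_forall_lt u t (hsS.1.1.trans hu.1.le) hu.2 ht.2 fun v hv =>
      ((max_le_iff.1 (_root_.le_runningSupPos (hz.mono htT)
        ⟨hsS.1.1.trans (hu.1.trans_le hv.1).le, hv.2⟩)).1).trans_lt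
        (hgt v ⟨hu.1.trans_le hv.1, hv.2⟩)).symm
  have hℓs : ℓ s = ℓ t := hflat.of_subset_closure
    (h.continuousOn.mono (Icc_subset_Icc hsS.1.1 ht.2)) continuousOn_const Ioc_subset_Icc_self
    (closure_Ioc hst.ne).ge ⟨le_rfl, hst.le⟩
  exact hlt.not_ge (hℓs ▸ hsS.2)

lemma eqOn_runningSupPos (h : IsSkorokhodReg T z ℓ) (hz : ContinuousOn z (Icc 0 T)) :
    EqOn ℓ (runningSupPos z) (Icc 0 T) := fun _ ht =>
  le_antisymm (h.le_runningSupPos hz ht) (h.runningSupPos_le ht)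

end IsSkorokhodReg

end Skorokhod

section Reflection

variable {N : ℕ} {θ : ℝ}

lemma continuous_sumC : Continuous (sumC : EuclideanSpace ℝ (Fin N) → ℝ) :=
  continuous_finsetSum _ fun i _ => (EuclideanSpace.proj (𝕜 := ℝ) i).continuous

lemma sumC_sub (x y : EuclideanSpace ℝ (Fin N)) : sumC (x - y) = sumC x - sumC y := by
  simp [sumC, Finset.sum_sub_distrib]

lemma sumC_sub_smul_eN (hN : 1 ≤ N) (x : EuclideanSpace ℝ (Fin N)) (c : ℝ) :
    sumC (x - c • eN N hN) = sumC x - c := by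
  simp [sumC, eN, PiLp.single_apply]

lemma abs_sumC_le (x : EuclideanSpace ℝ (Fin N)) : |sumC x| ≤ √N * ‖x‖ := by
  let one : EuclideanSpace ℝ (Fin N) := WithLp.toLp 2 fun _ => 1
  have hinner : inner ℝ one x = sumC x := by simp [PiLp.inner_apply, sumC, one]
  have hnorm : ‖one‖ = √N := by simp [EuclideanSpace.norm_eq, one]
  simpa [hinner, hnorm] using abs_real_inner_le_norm one x

variable {f g : ℝ → EuclideanSpace ℝ (Fin N)} {t T : ℝ}

lemma reg_congr (h : EqOn f g (Icc 0 t)) : reg N θ f t = reg N θ g t :=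
  congrArg sSup (image_congr fun u hu => by rw [h hu])

lemma continuousOn_sumC_sub (hf : ContinuousOn f (Icc 0 T)) :
    ContinuousOn (fun u => sumC (f u) - θ) (Icc 0 T) :=
  (continuous_sumC.comp_continuousOn hf).sub continuousOn_const

lemma continuousOn_Gam (hN : 1 ≤ N) (hf : ContinuousOn f (Icc 0 T)) :
    ContinuousOn (Gam N hN θ f) (Icc 0 T) :=
  hf.sub ((continuousOn_runningSupPos (continuousOn_sumC_sub hf)).smul continuousOn_const)

lemma norm_Gam_sub_le (hN : 1 ≤ N) (hf : ContinuousOn f (Icc 0 t))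
    (hg : ContinuousOn g (Icc 0 t)) (ht : 0 ≤ t) {ε : ℝ} (h : ∀ u ∈ Icc 0 t, ‖f u - g u‖ ≤ ε) :
    ‖Gam N hN θ f t - Gam N hN θ g t‖ ≤ (1 + √N) * ε := by
  have hreg : |reg N θ f t - reg N θ g t| ≤ √N * ε :=
    abs_runningSupPos_sub_le (continuousOn_sumC_sub hf) (continuousOn_sumC_sub hg) ht
      fun u hu => calc
        |sumC (f u) - θ - (sumC (g u) - θ)| = |sumC (f u - g u)| := by rw [sumC_sub]; ring_nf
        _ ≤ √N * ‖f u - g u‖ := abs_sumC_le _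
        _ ≤ √N * ε := mul_le_mul_of_nonneg_left (h u hu) (Real.sqrt_nonneg _)
  calc ‖Gam N hN θ f t - Gam N hN θ g t‖
      = ‖(f t - g t) - (reg N θ f t - reg N θ g t) • eN N hN‖ := by
        rw [Gam, Gam, sub_smul]; abel_nf
    _ ≤ ‖f t - g t‖ + |reg N θ f t - reg N θ g t| := by
        simpa [norm_smul, eN, PiLp.norm_single] using
          norm_sub_le (f t - g t) ((reg N θ f t - reg N θ g t) • eN N hN)
    _ ≤ (1 + √N) * ε := by linarith [h t ⟨ht, le_rfl⟩]

end Reflection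

section DrivenPath

open MeasureTheory intervalIntegral

variable {E : Type*} [NormedAddCommGroup E] [NormedSpace ℝ E]

noncomputable def drivenPath (x₀ : E) (w : ℝ → E) (b : E → E) (x : ℝ → E) (r : ℝ) : E :=
  x₀ + w r + ∫ u in (0 : ℝ)..r, b (x u)

variable {x₀ : E} {w : ℝ → E} {b : E → E} {x y : ℝ → E} {t T : ℝ}

lemma drivenPath_zero (hw0 : w 0 = 0) : drivenPath x₀ w b x 0 = x₀ := by
  simp [drivenPath, hw0]

lemma continuousOn_drivenPath (hT : 0 ≤ T) (hw : ContinuousOn w (Icc 0 T)) (hb : Continuous b)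
    (hx : ContinuousOn x (Icc 0 T)) : ContinuousOn (drivenPath x₀ w b x) (Icc 0 T) := by
  have hprim := continuousOn_primitive_interval (a := 0) (b := T) (μ := volume)
    (((hb.comp_continuousOn hx).integrableOn_Icc).mono_set (uIcc_of_le hT).subset)
  rw [uIcc_of_le hT] at hprim
  exact (continuousOn_const.add hw).add hprim

lemma drivenPath_congr (h : EqOn x y (Icc 0 t)) :
    EqOn (drivenPath x₀ w b x) (drivenPath x₀ w b y) (Icc 0 t) := fun r hr => by
  refine congrArg _ (integral_congr fun u hu => ?_)
  rw [uIcc_of_le hr.1] at hu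
  simp only [h ⟨hu.1, hu.2.trans hr.2⟩]

lemma norm_drivenPath_sub_le {K : NNReal} (hb : LipschitzWith K b)
    (hx : ContinuousOn x (Icc 0 t)) (hy : ContinuousOn y (Icc 0 t)) {r : ℝ} (hr : r ∈ Icc 0 t) :
    ‖drivenPath x₀ w b x r - drivenPath x₀ w b y r‖ ≤ K * ∫ u in (0 : ℝ)..t, ‖x u - y u‖ := by
  have hsub : uIcc 0 r ⊆ Icc 0 t := (uIcc_of_le hr.1).subset.trans (Icc_subset_Icc le_rfl hr.2)
  have hbx : IntervalIntegrable (fun u => b (x u)) volume 0 r :=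
    (hb.continuous.comp_continuousOn (hx.mono hsub)).intervalIntegrable
  have hby : IntervalIntegrable (fun u => b (y u)) volume 0 r :=
    (hb.continuous.comp_continuousOn (hy.mono hsub)).intervalIntegrable
  have hxy : ContinuousOn (fun u => ‖x u - y u‖) (Icc 0 t) := (hx.sub hy).norm
  calc ‖drivenPath x₀ w b x r - drivenPath x₀ w b y r‖
      = ‖∫ u in (0 : ℝ)..r, (b (x u) - b (y u))‖ := by
        rw [integral_sub hbx hby, drivenPath, drivenPath, add_sub_add_left_eq_sub]
    _ ≤ ∫ u in (0 : ℝ)..r, ‖b (x u) - b (y u)‖ := norm_integral_le_integral_norm hr.1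
    _ ≤ ∫ u in (0 : ℝ)..r, K * ‖x u - y u‖ :=
        integral_mono_on hr.1 (hbx.sub hby).norm ((hxy.mono hsub).intervalIntegrable.const_mul _)
          fun u _ => by simpa [dist_eq_norm] using hb.dist_le_mul (x u) (y u)
    _ = K * ∫ u in (0 : ℝ)..r, ‖x u - y u‖ := integral_const_mul _ _
    _ ≤ K * ∫ u in (0 : ℝ)..t, ‖x u - y u‖ := by
        gcongr
        refine integral_mono_interval le_rfl hr.1 hr.2 (Filter.Eventually.of_forall
          fun _ => norm_nonneg _) (hxy.intervalIntegrable_of_Icc (hr.1.trans hr.2))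

end DrivenPath

section Volterra

open intervalIntegral Nat

variable {E : Type*} [NormedAddCommGroup E] {T L : ℝ}

lemma norm_iterate_sub_le_of_volterra (hT : 0 ≤ T) {Φ : C(Icc 0 T, E) → C(Icc 0 T, E)}
    (hL : 0 ≤ L)
    (hΦ : ∀ A B (t : Icc 0 T),
      ‖Φ A t - Φ B t‖ ≤ L * ∫ u in (0 : ℝ)..t, ‖IccExtend hT A u - IccExtend hT B u‖)
    (A B : C(Icc 0 T, E)) (n : ℕ) (t : Icc 0 T) :
    ‖Φ^[n] A t - Φ^[n] B t‖ ≤ (L * t) ^ n / n ! * dist A B := by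
  induction n generalizing t with
  | zero => simpa [dist_eq_norm] using ContinuousMap.dist_apply_le_dist (f := A) (g := B) t
  | succ n ih =>
    have hbound : ∀ u ∈ Icc (0 : ℝ) t, ‖IccExtend hT (Φ^[n] A) u - IccExtend hT (Φ^[n] B) u‖
        ≤ (L * u) ^ n / n ! * dist A B := fun u hu => by
      have huT : u ∈ Icc 0 T := ⟨hu.1, hu.2.trans t.2.2⟩
      rw [IccExtend_of_mem hT _ huT, IccExtend_of_mem hT _ huT]
      exact ih ⟨u, huT⟩
    have hcont : ∀ C : C(Icc 0 T, E), Continuous (IccExtend hT C) := fun C =>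
      continuous_IccExtend_iff.2 C.continuous
    rw [Function.iterate_succ_apply', Function.iterate_succ_apply']
    calc ‖Φ (Φ^[n] A) t - Φ (Φ^[n] B) t‖
        ≤ L * ∫ u in (0 : ℝ)..t, ‖IccExtend hT (Φ^[n] A) u - IccExtend hT (Φ^[n] B) u‖ :=
          hΦ _ _ t
      _ ≤ L * ∫ u in (0 : ℝ)..t, (L * u) ^ n / n ! * dist A B := by
        gcongr
        exact integral_mono_on t.2.1 (((hcont _).sub (hcont _)).norm.intervalIntegrable _ _)
          (Continuous.intervalIntegrable (by fun_prop) _ _) hbound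
      _ = (L * t) ^ (n + 1) / (n + 1)! * dist A B := by
        have hpoly : (fun u : ℝ => (L * u) ^ n / n ! * dist A B)
            = fun u => L ^ n / n ! * dist A B * u ^ n := by
          funext u
          ring
        rw [hpoly, integral_const_mul, integral_pow, factorial_succ]
        push_cast
        field_simp
        ring

lemma exists_unique_fixedPoint_of_volterra [CompleteSpace E] (hT : 0 ≤ T) (hL : 0 ≤ L)
    {S : (ℝ → E) → ℝ → E} (hS : ∀ x, ContinuousOn x (Icc 0 T) → ContinuousOn (S x) (Icc 0 T))
    (hSL : ∀ x y, ContinuousOn x (Icc 0 T) → ContinuousOn y (Icc 0 T) → ∀ t ∈ Icc 0 T,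
      ‖S x t - S y t‖ ≤ L * ∫ u in (0 : ℝ)..t, ‖x u - y u‖) :
    ∃ x, ContinuousOn x (Icc 0 T) ∧ EqOn (S x) x (Icc 0 T) ∧
      ∀ y, ContinuousOn y (Icc 0 T) → EqOn (S y) y (Icc 0 T) → EqOn y x (Icc 0 T) := by
  have hext : ∀ A : C(Icc 0 T, E), ContinuousOn (IccExtend hT A) (Icc 0 T) := fun A =>
    (continuous_IccExtend_iff.2 A.continuous).continuousOn
  let Φ : C(Icc 0 T, E) → C(Icc 0 T, E) := fun A =>
    ⟨(Icc 0 T).domRestrict (S (IccExtend hT A)), (hS _ (hext A)).domRestrict⟩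
  have hΦ := norm_iterate_sub_le_of_volterra hT hL (Φ := Φ)
    fun A B t => hSL _ _ (hext A) (hext B) t t.2
  obtain ⟨n, hn⟩ : ∃ n : ℕ, (L * T) ^ n / n ! < 1 :=
    ((FloorSemiring.tendsto_pow_div_factorial_atTop (L * T)).eventually_lt_const one_pos).exists
  have hq : 0 ≤ (L * T) ^ n / n ! := by positivity
  have hcontr : ContractingWith ⟨_, hq⟩ Φ^[n] := by
    refine ⟨hn, LipschitzWith.of_dist_le_mul fun A B => ?_⟩
    refine (ContinuousMap.dist_le (by positivity)).2 fun t => ?_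
    rw [dist_eq_norm]
    refine (hΦ A B n t).trans ?_
    show _ ≤ (L * T) ^ n / n ! * dist A B
    gcongr
    exacts [mul_nonneg hL t.2.1, t.2.2]
  set A := ContractingWith.fixedPoint _ hcontr
  have hA : Φ A = A := ContractingWith.isFixedPt_fixedPoint_iterate hcontr
  refine ⟨IccExtend hT A, hext A, fun t ht => ?_, fun y hy hSy t ht => ?_⟩
  · exact (DFunLike.congr_fun hA ⟨t, ht⟩).trans (IccExtend_of_mem hT _ ht).symm
  let B : C(Icc 0 T, E) := ⟨(Icc 0 T).domRestrict y, hy.domRestrict⟩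
  have hBy : EqOn (IccExtend hT B) y (Icc 0 T) := fun u hu => IccExtend_of_mem hT _ hu
  have hB : Φ B = B := by
    ext ⟨t, ht⟩
    refine (norm_sub_eq_zero_iff.1 (le_antisymm ?_ (norm_nonneg _))).trans (hSy ht)
    refine (hSL _ _ (hext B) hy t ht).trans_eq ?_
    rw [integral_congr (g := fun _ => (0 : ℝ)) fun u hu => ?_, integral_zero,
      mul_zero]
    rw [uIcc_of_le ht.1] at hu
    simp [hBy ⟨hu.1, hu.2.trans ht.2⟩]
  have hBA : B = A := hcontr.fixedPoint_unique (Function.IsFixedPt.iterate hB n)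
  rw [IccExtend_of_mem hT _ ht, ← hBA]
  rfl

end Volterra

section ReflectedEquation

variable {N : ℕ} (hN : 1 ≤ N) {θ T : ℝ}

lemma isSkorokhodReg_iff {F y : ℝ → EuclideanSpace ℝ (Fin N)} {ℓ : ℝ → ℝ}
    (hy : ∀ t ∈ Icc 0 T, y t = F t - ℓ t • eN N hN) :
    IsSkorokhodReg T (fun t => sumC (F t) - θ) ℓ ↔
      ContinuousOn ℓ (Icc 0 T) ∧ MonotoneOn ℓ (Icc 0 T) ∧ ℓ 0 = 0 ∧
        (∀ t ∈ Icc 0 T, sumC (y t) ≤ θ) ∧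
        (∀ s t, 0 ≤ s → s ≤ t → t ≤ T → (∀ u ∈ Icc s t, sumC (y u) < θ) → ℓ t = ℓ s) := by
  have hsum : ∀ t ∈ Icc 0 T, sumC (y t) = sumC (F t) - ℓ t := fun t ht => by
    rw [hy t ht, sumC_sub_smul_eN]
  have hIcc : ∀ {s t u}, 0 ≤ s → t ≤ T → u ∈ Icc s t → u ∈ Icc 0 T := fun hs ht hu =>
    ⟨hs.trans hu.1, hu.2.trans ht⟩
  constructor <;> rintro ⟨hc, hm, h0, hle, hflat⟩ <;>
    exact ⟨hc, hm, h0, fun t ht => by linarith [hsum t ht, hle t ht],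
      fun s t hs hst ht hlt => hflat s t hs hst ht fun u hu => by
        linarith [hsum u (hIcc hs ht hu), hlt u hu]⟩

variable {x₀ : EuclideanSpace ℝ (Fin N)} {w : ℝ → EuclideanSpace ℝ (Fin N)}
  {b : EuclideanSpace ℝ (Fin N) → EuclideanSpace ℝ (Fin N)} {x y : ℝ → EuclideanSpace ℝ (Fin N)}

lemma norm_Gam_drivenPath_sub_le (hT : 0 ≤ T) (hw : ContinuousOn w (Icc 0 T)) {K : NNReal}
    (hb : LipschitzWith K b) (hx : ContinuousOn x (Icc 0 T)) (hy : ContinuousOn y (Icc 0 T))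
    {t : ℝ} (ht : t ∈ Icc 0 T) :
    ‖Gam N hN θ (drivenPath x₀ w b x) t - Gam N hN θ (drivenPath x₀ w b y) t‖
      ≤ (1 + √N) * K * ∫ u in (0 : ℝ)..t, ‖x u - y u‖ := by
  have hsub : Icc 0 t ⊆ Icc 0 T := Icc_subset_Icc le_rfl ht.2
  rw [mul_assoc]
  exact norm_Gam_sub_le hN ((continuousOn_drivenPath hT hw hb.continuous hx).mono hsub)
    ((continuousOn_drivenPath hT hw hb.continuous hy).mono hsub) ht.1
    fun u hu => norm_drivenPath_sub_le hb (hx.mono hsub) (hy.mono hsub) hu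

end ReflectedEquation

/-- Existence and uniqueness for the deterministic reflected integral equation: there is exactly
one continuous `x` with `x = Γ(x₀ + w + ∫₀^· b(x(u))du)` on `[0,T]`, and with
`ℓ = g_{x₀ + w + ∫₀^· b(x(u))du}`, the pair `(x, ℓ)` is the unique continuous pair solving the
associated Skorohod problem in `{1·y ≤ θ}` with reflection direction `-e_N`. -/
theorem reflected_integral_equation (N : ℕ) (hN : 1 ≤ N) (θ T : ℝ) (hT : 0 < T)
    (b : EuclideanSpace ℝ (Fin N) → EuclideanSpace ℝ (Fin N))
    (K : NNReal) (hb : LipschitzWith K b)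
    (x₀ : EuclideanSpace ℝ (Fin N)) (hx₀ : sumC x₀ ≤ θ)
    (w : ℝ → EuclideanSpace ℝ (Fin N))
    (hw : ContinuousOn w (Icc 0 T)) (hw0 : w 0 = 0) :
    ∃ x : ℝ → EuclideanSpace ℝ (Fin N),
      ContinuousOn x (Icc 0 T) ∧
      (∀ t ∈ Icc (0:ℝ) T,
        x t = Gam N hN θ (fun r => x₀ + w r + ∫ u in (0:ℝ)..r, b (x u)) t) ∧
      (∀ x' : ℝ → EuclideanSpace ℝ (Fin N), ContinuousOn x' (Icc 0 T) →
        (∀ t ∈ Icc (0:ℝ) T,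
          x' t = Gam N hN θ (fun r => x₀ + w r + ∫ u in (0:ℝ)..r, b (x' u)) t) →
        ∀ t ∈ Icc (0:ℝ) T, x' t = x t) ∧
      (∀ ℓ : ℝ → ℝ, (∀ t : ℝ, ℓ t = reg N θ (fun r => x₀ + w r + ∫ u in (0:ℝ)..r, b (x u)) t) →
        (ContinuousOn ℓ (Icc 0 T) ∧ MonotoneOn ℓ (Icc 0 T) ∧ ℓ 0 = 0 ∧
          (∀ t ∈ Icc (0:ℝ) T,
            x t = x₀ + w t + (∫ u in (0:ℝ)..t, b (x u)) - ℓ t • eN N hN) ∧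
          (∀ t ∈ Icc (0:ℝ) T, sumC (x t) ≤ θ) ∧
          (∀ s t : ℝ, 0 ≤ s → s ≤ t → t ≤ T →
            (∀ u ∈ Icc s t, sumC (x u) < θ) → ℓ t = ℓ s)) ∧
        (∀ (y : ℝ → EuclideanSpace ℝ (Fin N)) (ℓ' : ℝ → ℝ),
          ContinuousOn y (Icc 0 T) → ContinuousOn ℓ' (Icc 0 T) →
          MonotoneOn ℓ' (Icc 0 T) → ℓ' 0 = 0 →
          (∀ t ∈ Icc (0:ℝ) T,
            y t = x₀ + w t + (∫ u in (0:ℝ)..t, b (y u)) - ℓ' t • eN N hN) →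
          (∀ t ∈ Icc (0:ℝ) T, sumC (y t) ≤ θ) →
          (∀ s t : ℝ, 0 ≤ s → s ≤ t → t ≤ T →
            (∀ u ∈ Icc s t, sumC (y u) < θ) → ℓ' t = ℓ' s) →
          ∀ t ∈ Icc (0:ℝ) T, y t = x t ∧ ℓ' t = ℓ t)) := by
  have hF : ∀ x, ContinuousOn x (Icc 0 T) → ContinuousOn (drivenPath x₀ w b x) (Icc 0 T) :=
    fun x hx => continuousOn_drivenPath hT.le hw hb.continuous hx
  obtain ⟨x, hxc, hx, huniq⟩ := exists_unique_fixedPoint_of_volterra hT.le (by positivity)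
    (fun x hx => continuousOn_Gam hN (θ := θ) (hF x hx))
    fun x y hx hy t ht => norm_Gam_drivenPath_sub_le hN hT.le hw hb hx hy ht
  refine ⟨x, hxc, fun t ht => (hx ht).symm,
    fun y hy hSy => huniq y hy fun t ht => (hSy t ht).symm, fun ℓ hℓ => ?_⟩
  obtain rfl : ℓ = reg N θ (drivenPath x₀ w b x) := funext hℓ
  have hx' : ∀ t ∈ Icc 0 T,
      x t = drivenPath x₀ w b x t - reg N θ (drivenPath x₀ w b x) t • eN N hN :=
    fun t ht => (hx ht).symm
  have hz0 : sumC (drivenPath x₀ w b x 0) - θ ≤ 0 := by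
    rw [drivenPath_zero hw0]
    linarith
  obtain ⟨hℓc, hℓm, hℓ0, hxle, hxflat⟩ := (isSkorokhodReg_iff hN hx').1
    (isSkorokhodReg_runningSupPos (continuousOn_sumC_sub (hF x hxc)) hz0)
  refine ⟨⟨hℓc, hℓm, hℓ0, hx', hxle, hxflat⟩,
    fun y ℓ' hy hℓ'c hℓ'm hℓ'0 hyeq hyle hyflat t ht => ?_⟩
  have hℓ' : EqOn ℓ' (reg N θ (drivenPath x₀ w b y)) (Icc 0 T) :=
    ((isSkorokhodReg_iff hN (F := drivenPath x₀ w b y) hyeq).2 ⟨hℓ'c, hℓ'm, hℓ'0, hyle, hyflat⟩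
      ).eqOn_runningSupPos (continuousOn_sumC_sub (hF y hy))
  have hyx : EqOn y x (Icc 0 T) := huniq y hy fun t ht => by
    rw [hyeq t ht, hℓ' ht]
    rfl
  exact ⟨hyx ht, (hℓ' ht).trans
    (reg_congr (drivenPath_congr (hyx.mono (Icc_subset_Icc le_rfl ht.2))))⟩
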